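/- arXiv:2604.17962 — 2 statements merged into one kernel-verified Lean document; each statement's English description precedes it below -/
import Mathlib

section
/- Let Σ and Σ' be finite complete generalized fans in a finite dimensional real vector space V. Suppose there exists an injection u : max Σ → max Σ' between the sets of maximal elements (with respect to inclusion) such that σ ⊆ u(σ) for every σ ∈ max Σ. Then Σ = Σ' and u is the identity map. -/
open Set

noncomputable section

/-! ## Polyhedral cones and generalized fans -/

/-- A *polyhedral cone* in a real vector space: a subset of the form
`Σ_{j=1}^k ℝ_{≥0} v_j` for finitely many vectors `v_1, …, v_k`. -/
def IsPolyhedralCone {V : Type*} [AddCommGroup V] [Module ℝ V] (C : Set V) : Prop :=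
  ∃ (k : ℕ) (v : Fin k → V),
    C = {x | ∃ c : Fin k → ℝ, (∀ j, 0 ≤ c j) ∧ x = ∑ j, c j • v j}

/-- `F` is a *face* of the cone `C`: a nonempty convex subset of `C`, stable under
multiplication by nonnegative scalars, such that whenever `v, w ∈ C` and `v + w ∈ F`
one has `v, w ∈ F`. -/
def IsFaceOf {V : Type*} [AddCommGroup V] [Module ℝ V] (F C : Set V) : Prop :=
  F ⊆ C ∧ F.Nonempty ∧ Convex ℝ F ∧
    (∀ r : ℝ, 0 ≤ r → ∀ x ∈ F, r • x ∈ F) ∧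
    ∀ v ∈ C, ∀ w ∈ C, v + w ∈ F → v ∈ F ∧ w ∈ F

/-- A *generalized fan*: a set of polyhedral cones containing all faces of its members,
in which the intersection of any two members is a face of each of them. -/
def IsGeneralizedFan {V : Type*} [AddCommGroup V] [Module ℝ V] (𝒮 : Set (Set V)) : Prop :=
  (∀ σ ∈ 𝒮, IsPolyhedralCone σ) ∧
    (∀ σ ∈ 𝒮, ∀ τ : Set V, IsFaceOf τ σ → τ ∈ 𝒮) ∧
    ∀ σ₁ ∈ 𝒮, ∀ σ₂ ∈ 𝒮, IsFaceOf (σ₁ ∩ σ₂) σ₁ ∧ IsFaceOf (σ₁ ∩ σ₂) σ₂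

/-- The maximal members of a family of sets with respect to inclusion. -/
def maxMembers {α : Type*} (𝒮 : Set (Set α)) : Set (Set α) :=
  {σ ∈ 𝒮 | ∀ τ ∈ 𝒮, σ ⊆ τ → σ = τ}

/-- The dimension of a subset of a real vector space: the dimension of its linear span. -/
def setDim {V : Type*} [AddCommGroup V] [Module ℝ V] (F : Set V) : ℕ :=
  Module.finrank ℝ ↥(Submodule.span ℝ F)


/-!
A member of a fan containing a point of the algebraic relative interior of a maximal cone `τ`
is `τ` itself: its intersection with `τ` is a face of `τ` containing a relative interior point,
hence all of `τ`. Since the members are closed, finite in number and cover `V`,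
a whole neighbourhood of that point lies in `τ`, so maximal cones are full-dimensional, and by
Baire their interiors are dense. If `u σ ⊄ σ`, some interior point of `u σ` outside `σ` lies in
the interior of a maximal `τ ⊆ u τ`; then `u τ` and `u σ` share an interior point, so they are
equal and `τ = σ`, a contradiction. Thus `u` is the identity, every maximal cone of `Σ'`
meets the interior of, hence equals, a maximal cone of `Σ`, and both fans consist of the faces
of the same maximal cones.
-/

section Algebra

variable {V : Type*} [AddCommGroup V] [Module ℝ V]

/-- The algebraic relative interior of `C`. -/
def intrinsicCore (C : Set V) : Set V :=
  {x ∈ C | ∀ y ∈ C, ∃ s : ℝ, 0 < s ∧ x + s • (x - y) ∈ C}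

/-- For `y ∈ C`, the decomposition `(1 + s) • x = (x + s • (x - y)) + s • y` puts `s • y`
in `F`. -/
theorem IsFaceOf.eq_of_mem_intrinsicCore {F C : Set V} (hF : IsFaceOf F C)
    (hC : ∀ r : ℝ, 0 ≤ r → ∀ y ∈ C, r • y ∈ C) {x : V} (hxF : x ∈ F)
    (hx : x ∈ intrinsicCore C) : F = C := by
  obtain ⟨hFC, -, -, hFsmul, hFsum⟩ := hF
  refine hFC.antisymm fun y hy => ?_
  obtain ⟨s, hs, hz⟩ := hx.2 y hy
  have hsum : (x + s • (x - y)) + s • y ∈ F := by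
    convert hFsmul (1 + s) (by linarith) x hxF using 1
    module
  have hsy := (hFsum _ hz _ (hC s hs.le y hy) hsum).2
  simpa [hs.ne'] using hFsmul s⁻¹ (inv_nonneg.mpr hs.le) _ hsy

theorem IsPolyhedralCone.smul_mem {C : Set V} (hC : IsPolyhedralCone C) :
    ∀ r : ℝ, 0 ≤ r → ∀ x ∈ C, r • x ∈ C := by
  obtain ⟨k, v, rfl⟩ := hC
  rintro r hr _ ⟨c, hc, rfl⟩
  exact ⟨fun j => r * c j, fun j => mul_nonneg hr (hc j), by simp [Finset.smul_sum, mul_smul]⟩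

/-- The sum of the generators lies in the intrinsic core: prolonging the segment from
`∑ c j • v j` by the factor `(1 + ∑ c j)⁻¹` keeps all coefficients nonnegative. -/
theorem IsPolyhedralCone.intrinsicCore_nonempty {C : Set V} (hC : IsPolyhedralCone C) :
    (intrinsicCore C).Nonempty := by
  obtain ⟨k, v, rfl⟩ := hC
  refine ⟨∑ j, v j, ⟨fun _ => 1, fun _ => zero_le_one, by simp⟩, ?_⟩
  rintro _ ⟨c, hc, rfl⟩
  have hpos : 0 < 1 + ∑ j, c j := by
    linarith [Finset.sum_nonneg fun i (_ : i ∈ Finset.univ) => hc i]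
  refine ⟨(1 + ∑ j, c j)⁻¹, inv_pos.mpr hpos, fun j => 1 + (1 + ∑ j, c j)⁻¹ * (1 - c j),
    fun j => ?_, ?_⟩
  · have hcj : c j ≤ 1 + ∑ j, c j := by
      linarith [Finset.single_le_sum (fun i _ => hc i) (Finset.mem_univ j)]
    have : (1 + ∑ j, c j)⁻¹ * c j ≤ 1 := by
      rw [inv_mul_le_iff₀ hpos, mul_one]; exact hcj
    nlinarith [inv_pos.mpr hpos]
  · simp only [add_smul, mul_smul, sub_smul, one_smul, Finset.sum_add_distrib,
      ← Finset.smul_sum, Finset.sum_sub_distrib]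

end Algebra

theorem Set.Finite.exists_mem_maxMembers_superset {α : Type*} {S : Set (Set α)} (hfin : S.Finite)
    {σ : Set α} (hσ : σ ∈ S) : ∃ τ ∈ maxMembers S, σ ⊆ τ := by
  obtain ⟨τ, hστ, hτS, hmax⟩ := hfin.exists_le_maximal hσ
  exact ⟨τ, ⟨hτS, fun ρ hρ hτρ => hτρ.antisymm (hmax hρ hτρ)⟩, hστ⟩

namespace IsGeneralizedFan

variable {V : Type*} [AddCommGroup V] [Module ℝ V] {S : Set (Set V)}

theorem eq_of_mem_intrinsicCore (hS : IsGeneralizedFan S) {τ σ : Set V}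
    (hτ : τ ∈ maxMembers S) (hσ : σ ∈ S) {x : V} (hx : x ∈ intrinsicCore τ) (hxσ : x ∈ σ) :
    τ = σ := by
  have hface := (hS.2.2 τ hτ.1 σ hσ).1
  have hinter := hface.eq_of_mem_intrinsicCore (hS.1 τ hτ.1).smul_mem ⟨hx.1, hxσ⟩ hx
  exact hτ.2 σ hσ (inter_eq_left.mp hinter)

theorem mem_iff_exists_maxMembers (hS : IsGeneralizedFan S) (hfin : S.Finite) {σ : Set V} :
    σ ∈ S ↔ ∃ τ ∈ maxMembers S, IsFaceOf σ τ := by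
  refine ⟨fun hσ => ?_, fun ⟨τ, hτ, hστ⟩ => hS.2.1 τ hτ.1 σ hστ⟩
  obtain ⟨τ, hτ, hστ⟩ := hfin.exists_mem_maxMembers_superset hσ
  exact ⟨τ, hτ, inter_eq_left.mpr hστ ▸ (hS.2.2 σ hσ τ hτ.1).2⟩

theorem eq_of_maxMembers_eq {S' : Set (Set V)} (hS : IsGeneralizedFan S)
    (hS' : IsGeneralizedFan S') (hfin : S.Finite) (hfin' : S'.Finite)
    (h : maxMembers S = maxMembers S') : S = S' := by
  ext σ
  rw [hS.mem_iff_exists_maxMembers hfin, hS'.mem_iff_exists_maxMembers hfin', h]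

end IsGeneralizedFan

section ConeHull

variable {V : Type*} [AddCommGroup V] [Module ℝ V] {ι : Type*} [Fintype ι]

def coneHull (v : ι → V) : Set V :=
  {x | ∃ c : ι → ℝ, (∀ j, 0 ≤ c j) ∧ x = ∑ j, c j • v j}

theorem coneHull_eq_image (v : ι → V) :
    coneHull v = Fintype.linearCombination ℝ v '' Ici 0 := by
  ext x
  simp [coneHull, Pi.le_def, Fintype.linearCombination_apply, eq_comm]

theorem IsPolyhedralCone.convex {C : Set V} (hC : IsPolyhedralCone C) : Convex ℝ C := by
  obtain ⟨k, v, rfl⟩ := hC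
  change Convex ℝ (coneHull v)
  exact coneHull_eq_image v ▸ (convex_Ici 0).linear_image _

/-- The reduction step of Carathéodory's theorem for cones: moving along a linear relation
`∑ d j • v j = 0` until the first coefficient hits zero. -/
theorem exists_nonneg_repr_eq_zero_at {v : ι → V} {c d : ι → ℝ} (hc : ∀ j, 0 ≤ c j)
    (hd : ∑ j, d j • v j = 0) {j₀ : ι} (hj₀ : 0 < d j₀) :
    ∃ i, ∃ c' : ι → ℝ, (∀ j, 0 ≤ c' j) ∧ c' i = 0 ∧ ∑ j, c' j • v j = ∑ j, c j • v j := by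
  classical
  obtain ⟨i, hi, hmin⟩ := ({j | 0 < d j} : Finset ι).exists_min_image (fun j => c j / d j)
    ⟨j₀, by simpa using hj₀⟩
  simp only [Finset.mem_filter, Finset.mem_univ, true_and] at hi hmin
  have hr : 0 ≤ c i / d i := div_nonneg (hc i) hi.le
  refine ⟨i, fun j => c j - c i / d i * d j, fun j => ?_, by field_simp; ring, ?_⟩
  · rcases lt_or_ge 0 (d j) with hdj | hdj
    · linarith [(le_div_iff₀ hdj).mp (hmin j hdj)]
    · nlinarith [hc j]
  · simp [sub_smul, mul_smul, Finset.sum_sub_distrib, ← Finset.smul_sum, hd]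

theorem coneHull_eq_iUnion_of_not_linearIndependent [DecidableEq ι] (v : ι → V)
    (hv : ¬ LinearIndependent ℝ v) :
    coneHull v = ⋃ i, coneHull (fun j : {j // j ≠ i} => v j.1) := by
  refine (subset_antisymm ?_ (iUnion_subset fun i => ?_))
  · obtain ⟨g, hg, i₀, hi₀⟩ := Fintype.not_linearIndependent_iff.mp hv
    obtain ⟨d, hd, hdpos⟩ : ∃ d : ι → ℝ, ∑ j, d j • v j = 0 ∧ 0 < d i₀ := by
      rcases hi₀.lt_or_gt with hneg | hpos
      · exact ⟨-g, by simp [neg_smul, hg], by simpa using hneg⟩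
      · exact ⟨g, hg, hpos⟩
    rintro _ ⟨c, hc, rfl⟩
    obtain ⟨i, c', hc', hc'i, hsum⟩ := exists_nonneg_repr_eq_zero_at hc hd hdpos
    refine mem_iUnion.mpr ⟨i, fun j => c' j, fun j => hc' j, ?_⟩
    rw [← hsum, Fintype.sum_eq_add_sum_subtype_ne _ i, hc'i, zero_smul, zero_add]
  · rintro _ ⟨c, hc, rfl⟩
    refine ⟨fun j => if h : j = i then 0 else c ⟨j, h⟩, fun j => ?_, ?_⟩
    · dsimp only
      split_ifs
      exacts [le_rfl, hc _]
    · rw [Fintype.sum_eq_add_sum_subtype_ne _ i]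
      simp only [dif_pos, zero_smul, zero_add]
      exact Finset.sum_congr rfl fun j _ => by rw [dif_neg j.2]

variable [TopologicalSpace V] [IsTopologicalAddGroup V] [ContinuousSMul ℝ V] [T2Space V]

theorem isClosed_coneHull_of_linearIndependent {v : ι → V} (hv : LinearIndependent ℝ v) :
    IsClosed (coneHull v) := by
  have hL : Topology.IsClosedEmbedding (Fintype.linearCombination ℝ v) :=
    LinearMap.isClosedEmbedding_of_injective (LinearMap.ker_eq_bot.mpr
      (linearIndependent_iff_injective_fintypeLinearCombination.mp hv))
  rw [coneHull_eq_image]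
  exact hL.isClosedMap _ isClosed_Ici

theorem isClosed_coneHull (v : ι → V) : IsClosed (coneHull v) := by
  induction h : Fintype.card ι using Nat.strong_induction_on generalizing ι with
  | _ n ih =>
  classical
  by_cases hv : LinearIndependent ℝ v
  · exact isClosed_coneHull_of_linearIndependent hv
  rw [coneHull_eq_iUnion_of_not_linearIndependent v hv]
  exact isClosed_iUnion_of_finite fun i =>
    ih _ (h ▸ Fintype.card_subtype_lt (p := (· ≠ i)) (not_not.mpr rfl)) _ rfl

theorem IsPolyhedralCone.isClosed {C : Set V} (hC : IsPolyhedralCone C) : IsClosed C := by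
  obtain ⟨k, v, rfl⟩ := hC
  exact isClosed_coneHull v

end ConeHull

open Topology in
theorem interior_subset_intrinsicCore {V : Type*} [AddCommGroup V] [Module ℝ V]
    [TopologicalSpace V] [IsTopologicalAddGroup V] [ContinuousSMul ℝ V] (C : Set V) :
    interior C ⊆ intrinsicCore C := by
  refine fun x hx => ⟨interior_subset hx, fun y _ => ?_⟩
  have hev : ∀ᶠ s : ℝ in 𝓝 0, x + s • (x - y) ∈ C :=
    ((by fun_prop : Continuous fun s : ℝ => x + s • (x - y)).tendsto' 0 x (by simp)).eventually
      (mem_interior_iff_mem_nhds.mp hx)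
  obtain ⟨s, hsC, hs⟩ := ((hev.filter_mono nhdsWithin_le_nhds).and
    (self_mem_nhdsWithin : Ioi (0 : ℝ) ∈ 𝓝[>] 0)).exists
  exact ⟨s, hs, hsC⟩

theorem Set.Finite.exists_mem_maxMembers_inter_interior {X : Type*} [TopologicalSpace X]
    [BaireSpace X] {S : Set (Set X)} (hfin : S.Finite) (hclosed : ∀ σ ∈ S, IsClosed σ)
    (hcover : ⋃₀ S = univ) {U : Set X} (hU : IsOpen U) (hne : U.Nonempty) :
    ∃ τ ∈ maxMembers S, (U ∩ interior τ).Nonempty := by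
  obtain ⟨z, hzU, hz⟩ :=
    (dense_sUnion_interior_of_closed hclosed hfin.countable hcover).inter_open_nonempty U hU hne
  obtain ⟨σ, hσ, hzσ⟩ := mem_iUnion₂.mp hz
  obtain ⟨τ, hτ, hστ⟩ := hfin.exists_mem_maxMembers_superset hσ
  exact ⟨τ, hτ, z, hzU, interior_mono hστ hzσ⟩

namespace IsGeneralizedFan

variable {V : Type*} [AddCommGroup V] [Module ℝ V] [TopologicalSpace V] [IsTopologicalAddGroup V]
  [ContinuousSMul ℝ V] [T2Space V] {S S' : Set (Set V)}

theorem isClosed_of_mem (hS : IsGeneralizedFan S) {σ : Set V} (hσ : σ ∈ S) : IsClosed σ :=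
  (hS.1 σ hσ).isClosed

theorem mem_interior_of_mem_intrinsicCore (hS : IsGeneralizedFan S) (hfin : S.Finite)
    (hcomp : ⋃₀ S = univ) {τ : Set V} (hτ : τ ∈ maxMembers S) {x : V}
    (hx : x ∈ intrinsicCore τ) : x ∈ interior τ := by
  have hA : IsClosed (⋃ σ ∈ {σ ∈ S | x ∉ σ}, σ) :=
    (hfin.subset (sep_subset _ _)).isClosed_biUnion fun σ hσ => hS.isClosed_of_mem hσ.1
  have hAτ : (⋃ σ ∈ {σ ∈ S | x ∉ σ}, σ)ᶜ ⊆ τ := by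
    intro z hz
    obtain ⟨σ, hσ, hzσ⟩ := mem_sUnion.mp (hcomp.symm ▸ mem_univ z : z ∈ ⋃₀ S)
    have hxσ : x ∈ σ := by
      by_contra hxσ
      exact hz (mem_biUnion ⟨hσ, hxσ⟩ hzσ)
    rwa [hS.eq_of_mem_intrinsicCore hτ hσ hx hxσ]
  have hxA : x ∉ ⋃ σ ∈ {σ ∈ S | x ∉ σ}, σ := by
    simp only [mem_iUnion, mem_ofPred_eq]
    exact fun ⟨_, ⟨_, hxσ⟩, hxσ'⟩ => hxσ hxσ'
  exact interior_maximal hAτ hA.isOpen_compl hxA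

theorem interior_nonempty_of_mem_maxMembers (hS : IsGeneralizedFan S) (hfin : S.Finite)
    (hcomp : ⋃₀ S = univ) {τ : Set V} (hτ : τ ∈ maxMembers S) : (interior τ).Nonempty :=
  (hS.1 τ hτ.1).intrinsicCore_nonempty.mono fun _ hx =>
    hS.mem_interior_of_mem_intrinsicCore hfin hcomp hτ hx

variable [BaireSpace V]

theorem coe_apply_eq_of_injective_of_subset (hS : IsGeneralizedFan S)
    (hS' : IsGeneralizedFan S') (hfin : S.Finite) (hfin' : S'.Finite) (hcomp : ⋃₀ S = univ)
    (hcomp' : ⋃₀ S' = univ) {u : maxMembers S → maxMembers S'} (hu : Function.Injective u)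
    (husub : ∀ σ : maxMembers S, (σ : Set V) ⊆ u σ) (σ : maxMembers S) :
    (u σ : Set V) = σ := by
  have hσ : IsClosed (σ : Set V) := hS.isClosed_of_mem σ.2.1
  have hint : interior (u σ : Set V) ⊆ σ := by
    by_contra! h
    obtain ⟨τ, hτ, z, ⟨hzu, hzσ⟩, hzτ⟩ := hfin.exists_mem_maxMembers_inter_interior
      (fun _ => hS.isClosed_of_mem) hcomp (isOpen_interior.inter hσ.isOpen_compl)
      (not_subset.mp h)
    have hsame : u σ = u ⟨τ, hτ⟩ := Subtype.ext <| hS'.eq_of_mem_intrinsicCore (u σ).2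
      (u ⟨τ, hτ⟩).2.1 (interior_subset_intrinsicCore _ hzu) (husub _ (interior_subset hzτ))
    exact hzσ (hu hsame ▸ interior_subset hzτ)
  refine (husub σ).antisymm' ?_
  calc (u σ : Set V) ⊆ closure (u σ) := subset_closure
    _ = closure (interior (u σ)) :=
      ((hS'.1 _ (u σ).2.1).convex.closure_interior_eq_closure_of_nonempty_interior
        (hS'.interior_nonempty_of_mem_maxMembers hfin' hcomp' (u σ).2)).symm
    _ ⊆ closure σ := closure_mono hint
    _ = σ := hσ.closure_eq

theorem maxMembers_eq_of_coe_apply_eq (hS : IsGeneralizedFan S) (hS' : IsGeneralizedFan S')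
    (hfin : S.Finite) (hfin' : S'.Finite) (hcomp : ⋃₀ S = univ) (hcomp' : ⋃₀ S' = univ)
    {u : maxMembers S → maxMembers S'} (hid : ∀ σ : maxMembers S, (u σ : Set V) = σ) :
    maxMembers S = maxMembers S' := by
  have hsub : maxMembers S ⊆ maxMembers S' := fun σ hσ => by
    simpa [hid] using (u ⟨σ, hσ⟩).2
  refine hsub.antisymm fun τ hτ => ?_
  obtain ⟨σ, hσ, z, hzτ, hzσ⟩ := hfin.exists_mem_maxMembers_inter_interior
    (fun _ => hS.isClosed_of_mem) hcomp isOpen_interior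
    (hS'.interior_nonempty_of_mem_maxMembers hfin' hcomp' hτ)
  rwa [hS'.eq_of_mem_intrinsicCore hτ (hsub hσ).1 (interior_subset_intrinsicCore _ hzτ)
    (interior_subset hzσ)]

end IsGeneralizedFan

/-- **Lemma (fan rigidity).** Let `S` and `S'` be finite complete generalized fans in a
finite dimensional real vector space `V`. Suppose there exists an injection
`u : max S → max S'` between the sets of maximal elements (with respect to inclusion)
such that `σ ⊆ u σ` for every `σ ∈ max S`. Then `S = S'` and `u` is the identity. -/
theorem fan_eq_of_max_injection {V : Type*} [AddCommGroup V] [Module ℝ V]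
    [FiniteDimensional ℝ V]
    (S S' : Set (Set V)) (hS : IsGeneralizedFan S) (hS' : IsGeneralizedFan S')
    (hfin : S.Finite) (hfin' : S'.Finite)
    (hcomp : ⋃₀ S = Set.univ) (hcomp' : ⋃₀ S' = Set.univ)
    (u : maxMembers S → maxMembers S')
    (hu : Function.Injective u)
    (husub : ∀ σ : maxMembers S, (σ : Set V) ⊆ ((u σ : Set V))) :
    S = S' ∧ ∀ σ : maxMembers S, ((u σ : Set V)) = (σ : Set V) := by
  let e := (Module.finBasis ℝ V).equivFun
  let _ : NormedAddCommGroup V := .induced V _ e.toLinearMap e.injective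
  let _ : NormedSpace ℝ V := .induced ℝ V _ e.toLinearMap
  have hid := hS.coe_apply_eq_of_injective_of_subset hS' hfin hfin' hcomp hcomp' hu husub
  exact ⟨hS.eq_of_maxMembers_eq hS' hfin hfin'
    (hS.maxMembers_eq_of_coe_apply_eq hS' hfin hfin' hcomp hcomp' hid), hid⟩
end
end

section
/- Let f : ℝ^N → ℝ^{N'} be an ℝ-linear map and Σ a generalized fan in ℝ^N with support X. Put Σ_× := {σ ∈ Σ : f⁻¹(f(σ)) ∩ X = σ}. Then: (1) Σ' := {f(σ) : σ ∈ Σ_×} is a generalized fan in ℝ^{N'}; (2) the maps σ ↦ f(σ) and σ' ↦ f⁻¹(σ') ∩ X are mutually inverse bijections between Σ_× and Σ'; (3) if every maximal element of Σ belongs to Σ_×, then the support of Σ' is f(X). -/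
/-!
Call `σ` saturated if `σ = f⁻¹(f(σ)) ∩ X`. A saturated cone is recovered from its image,
saturated cones are closed under intersection with `f(σ₁ ∩ σ₂) = f(σ₁) ∩ f(σ₂)`, faces of `f(σ)`
pull back to saturated faces `f⁻¹(τ) ∩ σ` of `σ`, and a saturated face of `σ` maps onto a face
of `f(σ)`; this gives (1) and (2). For (3), every cone of a fan in finite dimension lies in a
maximal one: a cone of largest dimension above it is maximal, because a face of `ρ` spanning the
same subspace as `ρ` is `ρ` itself.
-/

open Set

noncomputable section

section

variable {V W : Type*} [AddCommGroup V] [Module ℝ V] [AddCommGroup W] [Module ℝ W]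

namespace IsPolyhedralCone

variable {C : Set V}

lemma add_mem (h : IsPolyhedralCone C) {x y : V} (hx : x ∈ C) (hy : y ∈ C) : x + y ∈ C := by
  obtain ⟨k, v, rfl⟩ := h
  obtain ⟨c, hc, rfl⟩ := hx
  obtain ⟨d, hd, rfl⟩ := hy
  exact ⟨c + d, fun j => add_nonneg (hc j) (hd j), by simp [add_smul, Finset.sum_add_distrib]⟩

lemma smul_mem_s1 (h : IsPolyhedralCone C) {r : ℝ} (hr : 0 ≤ r) {x : V} (hx : x ∈ C) :
    r • x ∈ C := by
  obtain ⟨k, v, rfl⟩ := h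
  obtain ⟨c, hc, rfl⟩ := hx
  exact ⟨fun j => r * c j, fun j => mul_nonneg hr (hc j), by simp [Finset.smul_sum, smul_smul]⟩

lemma convex_s1 (h : IsPolyhedralCone C) : Convex ℝ C :=
  fun _ hx _ hy _ _ ha hb _ => h.add_mem (h.smul_mem_s1 ha hx) (h.smul_mem_s1 hb hy)

lemma image (h : IsPolyhedralCone C) (f : V →ₗ[ℝ] W) : IsPolyhedralCone (f '' C) := by
  obtain ⟨k, v, rfl⟩ := h
  refine ⟨k, fun j => f (v j), Set.ext fun y => ⟨?_, ?_⟩⟩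
  · rintro ⟨x, ⟨c, hc, rfl⟩, rfl⟩
    exact ⟨c, hc, by simp⟩
  · rintro ⟨c, hc, rfl⟩
    exact ⟨∑ j, c j • v j, ⟨c, hc, rfl⟩, by simp⟩

end IsPolyhedralCone

namespace IsFaceOf

variable {F C : Set V}

lemma smul_mem_s1 (h : IsFaceOf F C) {r : ℝ} (hr : 0 ≤ r) {x : V} (hx : x ∈ F) : r • x ∈ F :=
  h.2.2.2.1 r hr x hx

lemma add_mem (h : IsFaceOf F C) {x y : V} (hx : x ∈ F) (hy : y ∈ F) : x + y ∈ F := by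
  have hmid := h.2.2.1 hx hy (by norm_num : (0 : ℝ) ≤ 1 / 2) (by norm_num : (0 : ℝ) ≤ 1 / 2)
    (by norm_num)
  convert h.smul_mem_s1 zero_le_two hmid using 1
  module

lemma exists_add_mem_of_mem_span (h : IsFaceOf F C) {z : V}
    (hz : z ∈ Submodule.span ℝ F) : ∃ w ∈ F, z + w ∈ F := by
  induction hz using Submodule.span_induction with
  | mem z hz => exact ⟨z, hz, h.add_mem hz hz⟩
  | zero =>
    obtain ⟨w, hw⟩ := h.2.1
    exact ⟨w, hw, by simpa using hw⟩
  | add z₁ z₂ _ _ ih₁ ih₂ =>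
    obtain ⟨w₁, hw₁, hzw₁⟩ := ih₁
    obtain ⟨w₂, hw₂, hzw₂⟩ := ih₂
    refine ⟨w₁ + w₂, h.add_mem hw₁ hw₂, ?_⟩
    simpa only [add_add_add_comm] using h.add_mem hzw₁ hzw₂
  | smul r z _ ih =>
    obtain ⟨w, hw, hzw⟩ := ih
    rcases le_or_gt 0 r with hr | hr
    · exact ⟨r • w, h.smul_mem_s1 hr hw, by simpa only [smul_add] using h.smul_mem_s1 hr hzw⟩
    · -- `r • z + (-r) • (z + w) = (-r) • w`
      refine ⟨(-r) • (z + w), h.smul_mem_s1 (by linarith) hzw, ?_⟩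
      convert h.smul_mem_s1 (by linarith : 0 ≤ -r) hw using 1
      module

lemma subset_of_span_le (h : IsFaceOf F C)
    (hspan : Submodule.span ℝ C ≤ Submodule.span ℝ F) : C ⊆ F := fun x hx =>
  have ⟨w, hw, hxw⟩ := h.exists_add_mem_of_mem_span (hspan (Submodule.subset_span hx))
  (h.2.2.2.2 x hx w (h.1 hw) hxw).1

end IsFaceOf

/-- The condition cutting `Σ_×` out of `Σ`. -/
def IsSaturated {α β : Type*} (f : α → β) (X σ : Set α) : Prop :=
  f ⁻¹' (f '' σ) ∩ X = σ

namespace IsSaturated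

variable {α β : Type*} {f : α → β} {X σ σ₁ σ₂ : Set α}

lemma subset (h : IsSaturated f X σ) : σ ⊆ X :=
  h ▸ inter_subset_right

lemma mem_of_apply_mem (h : IsSaturated f X σ) {x : α} (hx : x ∈ X) (hfx : f x ∈ f '' σ) :
    x ∈ σ :=
  h ▸ ⟨hfx, hx⟩

lemma inter (h₁ : IsSaturated f X σ₁) (h₂ : IsSaturated f X σ₂) :
    IsSaturated f X (σ₁ ∩ σ₂) := by
  refine Subset.antisymm (fun x ⟨hfx, hx⟩ => ?_)
    fun x hx => ⟨mem_image_of_mem f hx, h₁.subset hx.1⟩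
  obtain ⟨hfx₁, hfx₂⟩ := image_inter_subset f σ₁ σ₂ hfx
  exact ⟨h₁.mem_of_apply_mem hx hfx₁, h₂.mem_of_apply_mem hx hfx₂⟩

lemma image_inter (h₁ : σ₁ ⊆ X) (h₂ : IsSaturated f X σ₂) :
    f '' (σ₁ ∩ σ₂) = f '' σ₁ ∩ f '' σ₂ := by
  refine Subset.antisymm (image_inter_subset f σ₁ σ₂) ?_
  rintro _ ⟨⟨x, hx, rfl⟩, hfx⟩
  exact ⟨x, ⟨hx, h₂.mem_of_apply_mem (h₁ hx) hfx⟩, rfl⟩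

lemma preimage_inter (h : IsSaturated f X σ) {τ : Set β} (hτ : τ ⊆ f '' σ) :
    IsSaturated f X (f ⁻¹' τ ∩ σ) := by
  rw [IsSaturated, image_preimage_inter, inter_eq_left.mpr hτ]
  exact Subset.antisymm (fun x ⟨hfx, hx⟩ => ⟨hfx, h.mem_of_apply_mem hx (hτ hfx)⟩)
    (inter_subset_inter_right _ h.subset)

lemma injOn_image : InjOn (f '' ·) {σ | IsSaturated f X σ} :=
  fun σ₁ h₁ σ₂ h₂ (heq : f '' σ₁ = f '' σ₂) => h₁.symm.trans (by rwa [heq])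

end IsSaturated

namespace IsFaceOf

variable (f : V →ₗ[ℝ] W) {σ F : Set V}

lemma preimage_inter (hσ : IsPolyhedralCone σ) {τ : Set W} (hτ : IsFaceOf τ (f '' σ)) :
    IsFaceOf (f ⁻¹' τ ∩ σ) σ := by
  obtain ⟨hτσ, ⟨y, hy⟩, hconv, hsmul, hface⟩ := hτ
  obtain ⟨x, hx, rfl⟩ := hτσ hy
  refine ⟨inter_subset_right, ⟨x, hy, hx⟩, (hconv.linear_preimage f).inter hσ.convex_s1,
    fun r hr x hx => ⟨?_, hσ.smul_mem_s1 hr hx.2⟩, fun v hv w hw hvw => ?_⟩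
  · simpa using hsmul r hr _ hx.1
  · obtain ⟨hfv, hfw⟩ :=
      hface (f v) (mem_image_of_mem f hv) (f w) (mem_image_of_mem f hw) (by simpa using hvw.1)
    exact ⟨⟨hfv, hv⟩, ⟨hfw, hw⟩⟩

lemma image (hσ : IsPolyhedralCone σ) (hF : IsFaceOf F σ)
    (hsat : ∀ x ∈ σ, f x ∈ f '' F → x ∈ F) : IsFaceOf (f '' F) (f '' σ) := by
  obtain ⟨hFσ, hne, hconv, hsmul, hface⟩ := hF
  refine ⟨image_mono hFσ, hne.image f, hconv.linear_image f, ?_, ?_⟩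
  · rintro r hr _ ⟨x, hx, rfl⟩
    exact ⟨r • x, hsmul r hr x hx, by simp⟩
  · rintro _ ⟨v, hv, rfl⟩ _ ⟨w, hw, rfl⟩ hvw
    have hvwF : v + w ∈ F := hsat _ (hσ.add_mem hv hw) (by simpa using hvw)
    obtain ⟨hvF, hwF⟩ := hface v hv w hw hvwF
    exact ⟨mem_image_of_mem f hvF, mem_image_of_mem f hwF⟩

end IsFaceOf

namespace IsGeneralizedFan

variable {S : Set (Set V)}

lemma eq_of_subset_of_setDim_le [FiniteDimensional ℝ V] (hS : IsGeneralizedFan S)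
    {τ ρ : Set V} (hτ : τ ∈ S) (hρ : ρ ∈ S) (hτρ : τ ⊆ ρ) (hdim : setDim ρ ≤ setDim τ) :
    τ = ρ := by
  have hspan : Submodule.span ℝ τ = Submodule.span ℝ ρ :=
    Submodule.eq_of_le_of_finrank_le (Submodule.span_mono hτρ) hdim
  have hface : IsFaceOf τ ρ := inter_eq_left.mpr hτρ ▸ (hS.2.2 τ hτ ρ hρ).2
  exact hτρ.antisymm (hface.subset_of_span_le hspan.ge)

lemma exists_mem_maxMembers_superset [FiniteDimensional ℝ V] (hS : IsGeneralizedFan S)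
    {σ : Set V} (hσ : σ ∈ S) : ∃ τ ∈ maxMembers S, σ ⊆ τ := by
  have hdims : (setDim '' {τ | τ ∈ S ∧ σ ⊆ τ}).Finite :=
    (finite_Iic (Module.finrank ℝ V)).subset <| by
      rintro _ ⟨τ, -, rfl⟩
      exact Submodule.finrank_le _
  obtain ⟨τ, ⟨hτ, hστ⟩, hmax⟩ :=
    Finite.exists_maximalFor' setDim _ hdims ⟨σ, hσ, Subset.rfl⟩
  refine ⟨τ, ⟨hτ, fun ρ hρ hτρ => ?_⟩, hστ⟩
  exact hS.eq_of_subset_of_setDim_le hτ hρ hτρ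
    (hmax ⟨hρ, hστ.trans hτρ⟩ (Submodule.finrank_mono (Submodule.span_mono hτρ)))

lemma sUnion_maxMembers [FiniteDimensional ℝ V] (hS : IsGeneralizedFan S) :
    ⋃₀ maxMembers S = ⋃₀ S := by
  refine (sUnion_mono (sep_subset _ _)).antisymm fun x ⟨σ, hσ, hx⟩ => ?_
  obtain ⟨τ, hτ, hστ⟩ := hS.exists_mem_maxMembers_superset hσ
  exact ⟨τ, hτ, hστ hx⟩

variable (f : V →ₗ[ℝ] W)

lemma isFaceOf_image_inter_image (hS : IsGeneralizedFan S) {σ₁ σ₂ : Set V}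
    (h₁ : σ₁ ∈ S ∧ IsSaturated f (⋃₀ S) σ₁) (h₂ : σ₂ ∈ S ∧ IsSaturated f (⋃₀ S) σ₂) :
    IsFaceOf (f '' σ₁ ∩ f '' σ₂) (f '' σ₁) := by
  rw [← h₂.2.image_inter h₁.2.subset]
  exact (hS.2.2 σ₁ h₁.1 σ₂ h₂.1).1.image f (hS.1 σ₁ h₁.1)
    fun x hx hfx => (h₁.2.inter h₂.2).mem_of_apply_mem (h₁.2.subset hx) hfx

theorem image_saturated (hS : IsGeneralizedFan S) :
    IsGeneralizedFan ((f '' ·) '' {σ ∈ S | IsSaturated f (⋃₀ S) σ}) := by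
  refine ⟨?_, ?_, ?_⟩
  · rintro _ ⟨σ, hσ, rfl⟩
    exact (hS.1 σ hσ.1).image f
  · rintro _ ⟨σ, ⟨hσS, hσsat⟩, rfl⟩ τ hτ
    refine ⟨f ⁻¹' τ ∩ σ, ⟨hS.2.1 σ hσS _ (hτ.preimage_inter f (hS.1 σ hσS)),
      hσsat.preimage_inter hτ.1⟩,
      (image_preimage_inter _ _ _).trans (inter_eq_left.mpr hτ.1)⟩
  · rintro _ ⟨σ₁, h₁, rfl⟩ _ ⟨σ₂, h₂, rfl⟩
    exact ⟨hS.isFaceOf_image_inter_image f h₁ h₂,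
      inter_comm (f '' σ₁) _ ▸ hS.isFaceOf_image_inter_image f h₂ h₁⟩

end IsGeneralizedFan

end

/-- **Lemma (fans induced by a linear map).** Let `f : ℝ^N → ℝ^{N'}` be an `ℝ`-linear
map and `S` a generalized fan in `ℝ^N` with support `X`. Put
`Scross = {σ ∈ S : f⁻¹(f(σ)) ∩ X = σ}`. Then:
(1) `S' = {f(σ) : σ ∈ Scross}` is a generalized fan in `ℝ^{N'}`;
(2) the maps `σ ↦ f(σ)` and `σ' ↦ f⁻¹(σ') ∩ X` are mutually inverse bijections between
`Scross` and `S'`;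
(3) if every maximal element of `S` belongs to `Scross`, then the support of `S'` is
`f(X)`. -/
theorem fan_image_of_linearMap {N N' : ℕ} (f : (Fin N → ℝ) →ₗ[ℝ] (Fin N' → ℝ))
    (S : Set (Set (Fin N → ℝ))) (hS : IsGeneralizedFan S)
    (X : Set (Fin N → ℝ)) (hX : X = ⋃₀ S)
    (Scross : Set (Set (Fin N → ℝ)))
    (hScross : Scross = {σ ∈ S | ⇑f ⁻¹' (⇑f '' σ) ∩ X = σ})
    (S' : Set (Set (Fin N' → ℝ)))
    (hS' : S' = (fun σ => ⇑f '' σ) '' Scross) :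
    IsGeneralizedFan S' ∧
      (Set.BijOn (fun σ => ⇑f '' σ) Scross S' ∧
        (∀ σ ∈ Scross, ⇑f ⁻¹' (⇑f '' σ) ∩ X = σ) ∧
        ∀ σ' ∈ S', ⇑f ⁻¹' σ' ∩ X ∈ Scross ∧ ⇑f '' (⇑f ⁻¹' σ' ∩ X) = σ') ∧
      (maxMembers S ⊆ Scross → ⋃₀ S' = ⇑f '' X) := by
  subst hX hScross hS'
  have hsat : ∀ σ ∈ {σ ∈ S | IsSaturated f (⋃₀ S) σ}, IsSaturated f (⋃₀ S) σ := fun _ h => h.2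
  refine ⟨hS.image_saturated f,
    ⟨⟨mapsTo_image _ _, IsSaturated.injOn_image.mono hsat, surjOn_image _ _⟩, hsat, ?_⟩,
    fun hmax => ?_⟩
  · rintro _ ⟨σ, hσ, rfl⟩
    rw [show f ⁻¹' (f '' σ) ∩ ⋃₀ S = σ from hσ.2]
    exact ⟨hσ, rfl⟩
  · have hsupport : ⋃₀ {σ ∈ S | IsSaturated f (⋃₀ S) σ} = ⋃₀ S :=
      (sUnion_mono (sep_subset _ _)).antisymm (hS.sUnion_maxMembers.ge.trans (sUnion_mono hmax))
    exact image_sUnion.symm.trans (congrArg (f '' ·) hsupport)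
end
end
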